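/- Let q ∈ ℝ^d be a unit vector and let x₁, …, x_m ∈ ℝ^d be unit vectors with ‖q − x_i‖ = ρ for all i. Let r₁, …, r_ℓ be i.i.d. standard Gaussian random vectors in ℝ^d and define hash codes g(y) = (h_{r₁}(y), …, h_{r_ℓ}(y)) with h_r(y) = sign(⟨r, y⟩). Then for every δ ∈ (0,1), with probability at least 1 − m·δ over the choice of r₁, …, r_ℓ, for all pairs i, j ∈ {1, …, m}: |d_H(g(q), g(x_i)) − d_H(g(q), g(x_j))| ≤ 2·ℓ·√(log(2/δ)/(2ℓ)); i.e., the hash code of q is almost equidistant (in Hamming distance) from the hash codes of all the x_i. -/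

import Mathlib

open MeasureTheory ProbabilityTheory Real

noncomputable section

/-- The sign-hash value: `sign ∈ {−1,+1}` with the fixed convention `sign 0 = 1`. -/
def sgn (x : ℝ) : ℝ := if 0 ≤ x then 1 else -1

/-- The standard Gaussian measure `γ^d` on `ℝ^d`, i.e. the `d`-fold product of `N(0,1)`,
transported to `EuclideanSpace ℝ (Fin d)`. -/
def stdGaussian (d : ℕ) : Measure (EuclideanSpace ℝ (Fin d)) :=
  (Measure.pi fun _ : Fin d => gaussianReal 0 1).map
    (MeasurableEquiv.toLp 2 (Fin d → ℝ))

open Finset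

/-! Rotation invariance of the Gaussian makes the probability `p` that a random hyperplane
separates `q` from `x_i` depend only on `‖x_i‖` and `‖q - x_i‖`, hence not on `i`. So every
`d_H(g(q), g(x_i))` is a sum of `ℓ` independent Bernoulli(`p`) variables with the same mean `ℓ p`;
Hoeffding's inequality puts it within `ℓ √(log(2/δ)/(2ℓ))` of `ℓ p` outside an event of
probability `δ`, and a union bound over `i` concludes. -/

theorem stdGaussian_eq_stdGaussian_euclideanSpace (d : ℕ) :
    _root_.stdGaussian d = ProbabilityTheory.stdGaussian (EuclideanSpace ℝ (Fin d)) :=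
  map_pi_eq_stdGaussian

@[fun_prop]
theorem measurable_sgn : Measurable sgn :=
  Measurable.ite measurableSet_Ici measurable_const measurable_const

section
variable {E : Type*} [NormedAddCommGroup E] [InnerProductSpace ℝ E]

def signHashDisagree (q x : E) : Set E := {r | sgn (inner ℝ r q) ≠ sgn (inner ℝ r x)}

theorem measurableSet_signHashDisagree [MeasurableSpace E] [BorelSpace E] (q x : E) :
    MeasurableSet (signHashDisagree q x) :=
  (measurableSet_eq_fun (by fun_prop) (by fun_prop)).compl

theorem preimage_signHashDisagree (e : E ≃ₗᵢ[ℝ] E) (q x : E) :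
    e ⁻¹' signHashDisagree (e q) (e x) = signHashDisagree q x := by
  ext r
  simp [signHashDisagree, e.inner_map_map]

theorem exists_linearIsometryEquiv_apply_eq {q a b : E} (hab : ‖a‖ = ‖b‖)
    (hq : inner ℝ q a = inner ℝ q b) : ∃ e : E ≃ₗᵢ[ℝ] E, e q = q ∧ e a = b := by
  refine ⟨Submodule.reflection (ℝ ∙ (a - b))ᗮ, Submodule.reflection_mem_subspace_eq_self ?_,
    Submodule.reflection_sub hab⟩
  rw [Submodule.mem_orthogonal_singleton_iff_inner_right, inner_sub_left, real_inner_comm q a,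
    real_inner_comm q b, hq, sub_self]

theorem stdGaussian_signHashDisagree_eq [FiniteDimensional ℝ E] [MeasurableSpace E]
    [BorelSpace E] {q a b : E} (hab : ‖a‖ = ‖b‖) (hq : ‖q - a‖ = ‖q - b‖) :
    stdGaussian E (signHashDisagree q a) = stdGaussian E (signHashDisagree q b) := by
  have hqa := norm_sub_sq_real q a
  have hqb := norm_sub_sq_real q b
  rw [hq, hab] at hqa
  obtain ⟨e, heq, hea⟩ := exists_linearIsometryEquiv_apply_eq hab (by linarith)
  calc stdGaussian E (signHashDisagree q a)
      = (stdGaussian E).map e (signHashDisagree (e q) (e a)) := by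
        rw [Measure.map_apply e.continuous.measurable (measurableSet_signHashDisagree _ _),
          preimage_signHashDisagree]
    _ = stdGaussian E (signHashDisagree q b) := by rw [stdGaussian_map, heq, hea]

end

section
variable {Ω ι : Type*} [MeasurableSpace Ω] {μ : Measure Ω} [IsProbabilityMeasure μ] [Fintype ι]

theorem measureReal_le_abs_sum_sub_integral_le {X : ι → Ω → ℝ} (h_indep : iIndepFun X μ)
    (hm : ∀ i, AEMeasurable (X i) μ) {a b : ℝ} (hb : ∀ i, ∀ᵐ ω ∂μ, X i ω ∈ Set.Icc a b)
    {ε : ℝ} (hε : 0 ≤ ε) :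
    μ.real {ω | ε ≤ |∑ i, (X i ω - μ[X i])|} ≤
      2 * exp (-2 * ε ^ 2 / (Fintype.card ι * (b - a) ^ 2)) := by
  set c : NNReal := (‖b - a‖₊ / 2) ^ 2
  have hY : ∀ i, HasSubgaussianMGF (fun ω ↦ X i ω - μ[X i]) c μ :=
    fun i ↦ hasSubgaussianMGF_of_mem_Icc (hm i) (hb i)
  have h_indepY : iIndepFun (fun i ω ↦ X i ω - μ[X i]) μ :=
    (h_indep.comp (fun i x ↦ x - μ[X i]) (fun _ ↦ by fun_prop) :)
  have h_indep_negY : iIndepFun (fun i ω ↦ -(X i ω - μ[X i])) μ :=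
    (h_indep.comp (fun i x ↦ -(x - μ[X i])) (fun _ ↦ by fun_prop) :)
  have hexp : exp (-ε ^ 2 / (2 * ∑ _i : ι, c)) =
      exp (-2 * ε ^ 2 / (Fintype.card ι * (b - a) ^ 2)) := by
    have hsum : (2 * ∑ _i : ι, c : ℝ) = Fintype.card ι * (b - a) ^ 2 / 2 := by
      simp only [c, div_pow, sum_const, card_univ, nsmul_eq_mul, NNReal.coe_mul,
        NNReal.coe_natCast, NNReal.coe_div, NNReal.coe_pow, coe_nnnorm, norm_eq_abs, sq_abs,
        NNReal.coe_ofNat]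
      ring
    rw [hsum, div_div_eq_mul_div]
    congr 1
    ring
  have hupper := HasSubgaussianMGF.measure_sum_ge_le_of_iIndepFun h_indepY (s := Finset.univ)
    (fun i _ ↦ hY i) hε
  have hlower := HasSubgaussianMGF.measure_sum_ge_le_of_iIndepFun h_indep_negY (s := Finset.univ)
    (fun i _ ↦ (hY i).neg) hε
  calc μ.real {ω | ε ≤ |∑ i, (X i ω - μ[X i])|}
      ≤ μ.real ({ω | ε ≤ ∑ i, (X i ω - μ[X i])} ∪ {ω | ε ≤ ∑ i, -(X i ω - μ[X i])}) := by
        refine measureReal_mono (fun ω hω ↦ ?_)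
        simp only [Set.mem_ofPred_eq, Set.mem_union, Finset.sum_neg_distrib] at hω ⊢
        exact le_abs.mp hω
    _ ≤ μ.real {ω | ε ≤ ∑ i, (X i ω - μ[X i])} + μ.real {ω | ε ≤ ∑ i, -(X i ω - μ[X i])} :=
        measureReal_union_le _ _
    _ ≤ 2 * exp (-2 * ε ^ 2 / (Fintype.card ι * (b - a) ^ 2)) := by
        rw [← hexp]; linarith

open Classical in
theorem measureReal_le_abs_card_mem_sub_le {E : Type*} [MeasurableSpace E] {ν : Measure E}
    {R : ι → Ω → E} (hmeas : ∀ b, Measurable (R b)) (hindep : iIndepFun R μ)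
    (hlaw : ∀ b, μ.map (R b) = ν) {S : Set E} (hS : MeasurableSet S) {ε : ℝ} (hε : 0 ≤ ε) :
    μ.real {ω | ε ≤ |(#{b | R b ω ∈ S} : ℝ) - Fintype.card ι * ν.real S|} ≤
      2 * exp (-2 * ε ^ 2 / Fintype.card ι) := by
  have hind : Measurable (S.indicator (1 : E → ℝ)) := measurable_one.indicator hS
  have hmean : ∀ b, ∫ ω, S.indicator (1 : E → ℝ) (R b ω) ∂μ = ν.real S := fun b ↦ by
    rw [← integral_map (hmeas b).aemeasurable hind.aestronglyMeasurable, hlaw b,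
      integral_indicator_one hS]
  have hsum : ∀ ω, ∑ b, (S.indicator (1 : E → ℝ) (R b ω) - ∫ ω', S.indicator 1 (R b ω') ∂μ) =
      #{b | R b ω ∈ S} - Fintype.card ι * ν.real S := fun ω ↦ by
    rw [Finset.sum_sub_distrib]
    simp only [hmean]
    simp [Set.indicator_apply, Finset.sum_boole]
  have hbound : ∀ b, ∀ᵐ ω ∂μ, S.indicator (1 : E → ℝ) (R b ω) ∈ Set.Icc 0 1 :=
    fun b ↦ ae_of_all _ fun ω ↦ ⟨Set.indicator_nonneg (fun _ _ ↦ zero_le_one) _,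
      Set.indicator_le_self' (fun _ _ ↦ zero_le_one) _⟩
  have := measureReal_le_abs_sum_sub_integral_le (hindep.comp (fun _ ↦ _) (fun _ ↦ hind))
    (fun b ↦ (hind.comp (hmeas b)).aemeasurable) hbound hε
  simpa only [Function.comp_apply, hsum, sub_zero, one_pow, mul_one] using this

theorem ofReal_one_sub_mul_le_measure_compl_iUnion {B : ι → Set Ω} {δ : ℝ} (hδ : 0 ≤ δ)
    (hB : ∀ i, μ (B i) ≤ ENNReal.ofReal δ) :
    ENNReal.ofReal (1 - Fintype.card ι * δ) ≤ μ (⋃ i, B i)ᶜ := by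
  have hunion : μ (⋃ i, B i) ≤ ENNReal.ofReal (Fintype.card ι * δ) :=
    calc μ (⋃ i, B i) ≤ ∑ i, μ (B i) := measure_iUnion_fintype_le _ _
      _ ≤ ∑ _i : ι, ENNReal.ofReal δ := Finset.sum_le_sum fun i _ ↦ hB i
      _ = ENNReal.ofReal (Fintype.card ι * δ) := by
        rw [Finset.sum_const, Finset.card_univ, nsmul_eq_mul, ENNReal.ofReal_mul (by positivity),
          ENNReal.ofReal_natCast]
  rw [ENNReal.ofReal_sub _ (by positivity), ENNReal.ofReal_one, tsub_le_iff_right,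
    ← measure_univ (μ := μ)]
  exact (measure_univ_le_add_compl _).trans (by rw [add_comm]; gcongr)

end

theorem two_mul_exp_neg_two_mul_sq_div_eq {n δ : ℝ} (hn : 0 < n) (hδ₀ : 0 < δ) (hδ : δ ≤ 2) :
    2 * exp (-2 * (n * √(log (2 / δ) / (2 * n))) ^ 2 / n) = δ := by
  have hlog : 0 ≤ log (2 / δ) := log_nonneg (by rwa [le_div_iff₀ hδ₀, one_mul])
  rw [mul_pow, sq_sqrt (by positivity)]
  field_simp
  rw [exp_neg, exp_log (by positivity)]
  field_simp

theorem hash_code_almost_equidistant_general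
    {Ω : Type*} [MeasurableSpace Ω] (μ : Measure Ω) [IsProbabilityMeasure μ]
    (d ℓ m : ℕ) (hℓ : 0 < ℓ)
    (q : EuclideanSpace ℝ (Fin d))
    (x : Fin m → EuclideanSpace ℝ (Fin d)) (hx : ∀ i, ‖x i‖ = 1)
    (ρ : ℝ) (hρ : ∀ i, ‖q - x i‖ = ρ)
    (R : Fin ℓ → Ω → EuclideanSpace ℝ (Fin d))
    (hmeas : ∀ b, Measurable (R b))
    (hindep : iIndepFun R μ)
    (hgauss : ∀ b, μ.map (R b) = stdGaussian d)
    (dH : Fin m → Ω → ℕ)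
    (hdH : ∀ i ω, dH i ω = (Finset.univ.filter fun b : Fin ℓ =>
      sgn (inner ℝ (R b ω) q : ℝ) ≠ sgn (inner ℝ (R b ω) (x i) : ℝ)).card)
    (δ : ℝ) (hδ₀ : 0 < δ) (hδ₁ : δ < 1) :
    ENNReal.ofReal (1 - m * δ) ≤
      μ {ω | ∀ i j : Fin m,
        |(dH i ω : ℝ) - (dH j ω : ℝ)| ≤
          2 * ℓ * Real.sqrt (Real.log (2 / δ) / (2 * ℓ))} := by
  set p : Fin m → ℝ := fun i ↦ (stdGaussian d).real (signHashDisagree q (x i))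
  have hp : ∀ i j, p i = p j := fun i j ↦ by
    simp only [p, Measure.real, stdGaussian_eq_stdGaussian_euclideanSpace,
      stdGaussian_signHashDisagree_eq ((hx i).trans (hx j).symm) ((hρ i).trans (hρ j).symm)]
  set t := ℓ * Real.sqrt (Real.log (2 / δ) / (2 * ℓ))
  have ht : 2 * exp (-2 * t ^ 2 / ℓ) = δ :=
    two_mul_exp_neg_two_mul_sq_div_eq (by positivity) hδ₀ (by linarith)
  have hbad : ∀ i, μ {ω | t ≤ |(dH i ω : ℝ) - ℓ * p i|} ≤ ENNReal.ofReal δ := fun i ↦ by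
    have := measureReal_le_abs_card_mem_sub_le hmeas hindep hgauss
      (measurableSet_signHashDisagree q (x i)) (by positivity : 0 ≤ t)
    rw [Fintype.card_fin, ht] at this
    rw [ENNReal.le_ofReal_iff_toReal_le (measure_ne_top _ _) hδ₀.le, ← measureReal_def]
    convert this using 6 with ω
    rw [hdH]
    congr!
  have hgood := ofReal_one_sub_mul_le_measure_compl_iUnion hδ₀.le hbad
  rw [Fintype.card_fin] at hgood
  refine hgood.trans (measure_mono ?_)
  intro ω hω i j
  simp only [Set.mem_compl_iff, Set.mem_iUnion, Set.mem_ofPred_eq, not_exists, not_le] at hω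
  calc |(dH i ω : ℝ) - dH j ω| = |((dH i ω : ℝ) - ℓ * p i) - ((dH j ω : ℝ) - ℓ * p j)| := by
        rw [hp i j]; congr 1; ring
    _ ≤ t + t := (abs_sub _ _).trans (add_le_add (hω i).le (hω j).le)
    _ = _ := by ring

/-- For a unit vector `q` and unit vectors `x₁, …, x_m` all at distance `ρ`
from `q`, and i.i.d. standard Gaussian hyperplanes `r₁, …, r_ℓ`, with probability at least
`1 − m·δ` the hash code of `q` is almost equidistant (in Hamming distance) from the hash
codes of all the `x_i`: for all `i, j`,
`|d_H(g(q), g(x_i)) − d_H(g(q), g(x_j))| ≤ 2·ℓ·√(log(2/δ)/(2ℓ))`. -/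
theorem hash_code_almost_equidistant
    {Ω : Type*} [MeasurableSpace Ω] (μ : Measure Ω) [IsProbabilityMeasure μ]
    (d ℓ m : ℕ) (hℓ : 0 < ℓ)
    (q : EuclideanSpace ℝ (Fin d)) (hq : ‖q‖ = 1)
    (x : Fin m → EuclideanSpace ℝ (Fin d)) (hx : ∀ i, ‖x i‖ = 1)
    (ρ : ℝ) (hρ : ∀ i, ‖q - x i‖ = ρ)
    (R : Fin ℓ → Ω → EuclideanSpace ℝ (Fin d))
    (hmeas : ∀ b, Measurable (R b))
    (hindep : iIndepFun R μ)
    (hgauss : ∀ b, μ.map (R b) = stdGaussian d)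
    (dH : Fin m → Ω → ℕ)
    (hdH : ∀ i ω, dH i ω = (Finset.univ.filter fun b : Fin ℓ =>
      sgn (inner ℝ (R b ω) q : ℝ) ≠ sgn (inner ℝ (R b ω) (x i) : ℝ)).card)
    (δ : ℝ) (hδ₀ : 0 < δ) (hδ₁ : δ < 1) :
    ENNReal.ofReal (1 - m * δ) ≤
      μ {ω | ∀ i j : Fin m,
        |(dH i ω : ℝ) - (dH j ω : ℝ)| ≤
          2 * ℓ * Real.sqrt (Real.log (2 / δ) / (2 * ℓ))} :=
  hash_code_almost_equidistant_general μ d ℓ m hℓ q x hx ρ hρ R hmeas hindep hgauss dH hdH δ hδ₀ hδ₁
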